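/- arXiv:1706.00971 — 5 statements merged into one kernel-verified Lean document; each statement's English description precedes it below -/
import Mathlib

section
/- For 0 < α < 1, the sequence b_j = (j+1)^{1-α} - j^{1-α} is strictly log-convex: b_j^2 < b_{j-1} · b_{j+1} for all j ≥ 1. -/
/-!
Writing `b x = (1 - α) ∫₀¹ (x + s)^(-α) ds`, log-convexity of `b` reduces to that of the integrand
in `x`, which holds strictly because `t^(-2α) < ((t - 1)(t + 1))^(-α)`. Cauchy–Schwarz transfers
this to the integrals `A, C, D` in its elementary form: integrate the pointwise bound
`2μa < μ²c + d` (valid whenever `a² < cd`) and take `μ = A / C`.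
-/

open MeasureTheory intervalIntegral Set

variable {α : ℝ}

lemma intervalIntegrable_add_rpow_neg (hα : α < 1) (x : ℝ) :
    IntervalIntegrable (fun s : ℝ => (x + s) ^ (-α)) volume 0 1 := by
  simpa using (intervalIntegrable_rpow' (a := x) (b := x + 1) (by linarith)).comp_add_left x

lemma one_sub_mul_integral_add_rpow_neg (hα : α < 1) (x : ℝ) :
    (1 - α) * ∫ s in (0 : ℝ)..1, (x + s) ^ (-α) = (x + 1) ^ (1 - α) - x ^ (1 - α) := by
  rw [integral_comp_add_left (fun s => s ^ (-α)), integral_rpow (Or.inl (by linarith)), add_zero,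
    neg_add_eq_sub, mul_div_cancel₀ _ (by linarith)]

lemma integral_add_rpow_neg_pos (hα : α < 1) {x : ℝ} (hx : 0 ≤ x) :
    0 < ∫ s in (0 : ℝ)..1, (x + s) ^ (-α) :=
  intervalIntegral_pos_of_pos_on (intervalIntegrable_add_rpow_neg hα x)
    (fun s hs => Real.rpow_pos_of_pos (by linarith [hs.1]) _) one_pos

lemma rpow_neg_sq_lt_mul (hα : 0 < α) {t : ℝ} (ht : 1 < t) :
    (t ^ (-α)) ^ 2 < (t - 1) ^ (-α) * (t + 1) ^ (-α) := by
  rw [← Real.mul_rpow (by linarith) (by linarith), Real.rpow_pow_comm (by linarith)]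
  exact Real.rpow_lt_rpow_of_neg (by nlinarith) (by nlinarith) (by linarith)

lemma two_mul_mul_lt_of_sq_lt_mul {a c d μ : ℝ} (hc : 0 < c) (hd : 0 < d) (hμ : 0 < μ)
    (h : a ^ 2 < c * d) : 2 * μ * a < μ ^ 2 * c + d := by
  have hsq : (2 * μ * a) ^ 2 < (μ ^ 2 * c + d) ^ 2 := by
    nlinarith [sq_nonneg (μ ^ 2 * c - d), mul_pos hμ hμ]
  exact (le_abs_self _).trans_lt (abs_lt_of_sq_lt_sq hsq (by positivity))

lemma sq_lt_mul_of_forall_two_mul_mul_lt {a c d : ℝ} (ha : 0 < a) (hc : 0 < c)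
    (h : ∀ μ > 0, 2 * μ * a < μ ^ 2 * c + d) : a ^ 2 < c * d := by
  have := h (a / c) (div_pos ha hc)
  field_simp at this
  nlinarith

theorem sq_integral_add_rpow_neg_lt_mul (hα0 : 0 < α) (hα1 : α < 1) {x : ℝ} (hx : 1 ≤ x) :
    (∫ s in (0 : ℝ)..1, (x + s) ^ (-α)) ^ 2 <
      (∫ s in (0 : ℝ)..1, (x - 1 + s) ^ (-α)) * ∫ s in (0 : ℝ)..1, (x + 1 + s) ^ (-α) := by
  refine sq_lt_mul_of_forall_two_mul_mul_lt (integral_add_rpow_neg_pos hα1 (by linarith))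
    (integral_add_rpow_neg_pos hα1 (by linarith)) fun μ hμ => ?_
  have hA := intervalIntegrable_add_rpow_neg hα1 x
  have hC := intervalIntegrable_add_rpow_neg hα1 (x - 1)
  have hD := intervalIntegrable_add_rpow_neg hα1 (x + 1)
  have hpointwise : ∀ s ∈ Ioo (0 : ℝ) 1,
      2 * μ * (x + s) ^ (-α) < μ ^ 2 * (x - 1 + s) ^ (-α) + (x + 1 + s) ^ (-α) := by
    intro s hs
    have ht : 1 < x + s := by linarith [hs.1]
    refine two_mul_mul_lt_of_sq_lt_mul (Real.rpow_pos_of_pos (by linarith) _)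
      (Real.rpow_pos_of_pos (by linarith) _) hμ ?_
    simpa only [sub_add_eq_add_sub, add_right_comm x 1 s] using rpow_neg_sq_lt_mul hα0 ht
  have hgap := intervalIntegral_pos_of_pos_on (((hC.const_mul (μ ^ 2)).add hD).sub
    (hA.const_mul (2 * μ))) (fun s hs => sub_pos.2 (hpointwise s hs)) one_pos
  rw [integral_sub ((hC.const_mul _).add hD) (hA.const_mul _), integral_add (hC.const_mul _) hD,
    intervalIntegral.integral_const_mul, intervalIntegral.integral_const_mul] at hgap
  linarith

theorem sq_add_one_rpow_sub_rpow_lt_mul (hα0 : 0 < α) (hα1 : α < 1) {x : ℝ} (hx : 1 ≤ x) :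
    ((x + 1) ^ (1 - α) - x ^ (1 - α)) ^ 2 <
      (x ^ (1 - α) - (x - 1) ^ (1 - α)) * ((x + 2) ^ (1 - α) - (x + 1) ^ (1 - α)) := by
  have hA := one_sub_mul_integral_add_rpow_neg hα1 x
  have hC := one_sub_mul_integral_add_rpow_neg hα1 (x - 1)
  have hD := one_sub_mul_integral_add_rpow_neg hα1 (x + 1)
  rw [sub_add_cancel] at hC
  rw [add_assoc, one_add_one_eq_two] at hD
  rw [← hA, ← hC, ← hD, mul_pow, mul_mul_mul_comm, ← sq]
  exact mul_lt_mul_of_pos_left (sq_integral_add_rpow_neg_lt_mul hα0 hα1 hx) (by nlinarith)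

/-- For `0 < α < 1`, the sequence `b j = (j+1)^(1-α) - j^(1-α)` is strictly
log-convex: `(b j)^2 < b (j-1) * b (j+1)` for all `j ≥ 1`. -/
theorem stmt_4 (α : ℝ) (hα0 : 0 < α) (hα1 : α < 1)
    (b : ℕ → ℝ) (hb : ∀ j : ℕ, b j = ((j : ℝ) + 1) ^ (1 - α) - (j : ℝ) ^ (1 - α))
    (j : ℕ) (hj : 1 ≤ j) :
    (b j) ^ 2 < b (j - 1) * b (j + 1) := by
  rw [hb, hb, hb, Nat.cast_sub hj, Nat.cast_add, Nat.cast_one, sub_add_cancel, add_assoc,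
    one_add_one_eq_two]
  exact sq_add_one_rpow_sub_rpow_lt_mul hα0 hα1 (by exact_mod_cast hj)
end

section
/- Let (b_j)_{j≥0} be a positive sequence with b_0 = 1, and define e_0 = 1 and e_j = -∑_{i=0}^{j-1} b_{j-i} e_i for j ≥ 1 (the reciprocal power series coefficients). If b is strictly log-convex (b_j^2 < b_{j-1} b_{j+1} for j ≥ 1) and strictly decreasing with b_1 < b_0, then e_n < 0 for all n ≥ 1. -/
/-!
Log-convexity of `b` makes the ratios `b (k + 1) / b k` strictly increasing. Subtracting
`b (n - 1)` times the recurrence for `e n` from `b n` times the (vanishing) convolution that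
defines `e (n - 1)` eliminates `b 0` and gives
`b (n - 1) * e n = ∑_{1 ≤ i < n} (b n * b (n - 1 - i) - b (n - 1) * b (n - i)) * e i`,
whose coefficients are positive by the monotonicity of the ratios. Hence `e n < 0` by strong
induction, starting from `e 1 = -b 1`.
-/

open Finset

namespace ReciprocalSeries

variable {b e : ℕ → ℝ}

theorem strictMono_ratio (hbpos : ∀ j, 0 < b j)
    (hblc : ∀ j : ℕ, 1 ≤ j → b j ^ 2 < b (j - 1) * b (j + 1)) :
    StrictMono fun k => b (k + 1) / b k := by
  refine strictMono_nat_of_lt_succ fun k => ?_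
  rw [div_lt_div_iff₀ (hbpos k) (hbpos (k + 1))]
  have h := hblc (k + 1) k.succ_pos
  rw [Nat.add_sub_cancel] at h
  nlinarith

theorem coeff_pos (hbpos : ∀ j, 0 < b j)
    (hblc : ∀ j : ℕ, 1 ≤ j → b j ^ 2 < b (j - 1) * b (j + 1)) {n i : ℕ} (hi : 1 ≤ i)
    (hin : i < n + 2) : 0 < b (n + 2) * b (n + 1 - i) - b (n + 1) * b (n + 2 - i) := by
  have h := strictMono_ratio hbpos hblc (show n + 1 - i < n + 1 by omega)
  simp only [show n + 1 - i + 1 = n + 2 - i by omega] at h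
  rw [div_lt_div_iff₀ (hbpos _) (hbpos _)] at h
  linarith

theorem sum_mul_eq_zero (hb0 : b 0 = 1)
    (herec : ∀ j : ℕ, 1 ≤ j → e j = -∑ i ∈ range j, b (j - i) * e i) {j : ℕ} (hj : 1 ≤ j) :
    ∑ i ∈ range (j + 1), b (j - i) * e i = 0 := by
  rw [sum_range_succ, Nat.sub_self, hb0, herec j hj]
  ring

theorem mul_succ_succ_eq_sum (hb0 : b 0 = 1)
    (herec : ∀ j : ℕ, 1 ≤ j → e j = -∑ i ∈ range j, b (j - i) * e i) (n : ℕ) :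
    b (n + 1) * e (n + 2) =
      ∑ i ∈ range (n + 2), (b (n + 2) * b (n + 1 - i) - b (n + 1) * b (n + 2 - i)) * e i := by
  simp only [sub_mul, sum_sub_distrib, mul_assoc, ← mul_sum]
  rw [sum_mul_eq_zero hb0 herec n.succ_pos, herec (n + 2) (by omega)]
  ring

end ReciprocalSeries

open ReciprocalSeries in
theorem stmt_5_general (b e : ℕ → ℝ)
    (hb0 : b 0 = 1)
    (hbpos : ∀ j, 0 < b j)
    (hblc : ∀ j : ℕ, 1 ≤ j → (b j) ^ 2 < b (j - 1) * b (j + 1))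
    (he0 : e 0 = 1)
    (herec : ∀ j : ℕ, 1 ≤ j → e j = -∑ i ∈ Finset.range j, b (j - i) * e i)
    (n : ℕ) (hn : 1 ≤ n) :
    e n < 0 := by
  induction n using Nat.strong_induction_on with
  | _ n IH =>
    obtain rfl | ⟨n, rfl⟩ : n = 1 ∨ ∃ m, n = m + 2 := by
      rcases n with _ | _ | m <;> simp_all
    · simpa [herec 1 le_rfl, he0] using hbpos 1
    have hterm : ∀ i, 1 ≤ i → i < n + 2 →
        (b (n + 2) * b (n + 1 - i) - b (n + 1) * b (n + 2 - i)) * e i < 0 := fun i hi hin =>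
      mul_neg_of_pos_of_neg (coeff_pos hbpos hblc hi hin) (IH i hin hi)
    have hsum : ∑ i ∈ range (n + 2),
        (b (n + 2) * b (n + 1 - i) - b (n + 1) * b (n + 2 - i)) * e i < 0 := by
      refine sum_neg' (fun i hi => ?_) ⟨1, by simp, hterm 1 le_rfl (by omega)⟩
      rcases Nat.eq_zero_or_pos i with rfl | hi0
      · simp [mul_comm]
      · exact (hterm i hi0 (mem_range.mp hi)).le
    rw [← mul_succ_succ_eq_sum hb0 herec n] at hsum
    exact neg_of_mul_neg_right hsum (hbpos (n + 1)).le

/-- Reciprocal power series coefficients of a positive, strictly decreasing,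
strictly log-convex sequence with `b 0 = 1` are negative: `e n < 0` for `n ≥ 1`. -/
theorem stmt_5 (b e : ℕ → ℝ)
    (hb0 : b 0 = 1)
    (hbpos : ∀ j, 0 < b j)
    (hbdec : ∀ j, b (j + 1) < b j)
    (hblc : ∀ j : ℕ, 1 ≤ j → (b j) ^ 2 < b (j - 1) * b (j + 1))
    (he0 : e 0 = 1)
    (herec : ∀ j : ℕ, 1 ≤ j → e j = -∑ i ∈ Finset.range j, b (j - i) * e i)
    (n : ℕ) (hn : 1 ≤ n) :
    e n < 0 :=
  stmt_5_general b e hb0 hbpos hblc he0 herec n hn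
end

section
/- Let b : ℕ → ℝ satisfy b_0 = 1, b_j > 0, b_j strictly decreasing, strictly log-convex (b_j^2 < b_{j-1}b_{j+1}), and ∑ b_j = ∞. Define e by e_0 = 1, e_j = -∑_{i=0}^{j-1} b_{j-i} e_i. Then the partial sums satisfy ∑_{j=0}^{n} e_j > 0 for every n ≥ 0. -/
/-!
Kaluza's argument: log-convexity makes the ratios `b (k + 1) / b k` increase, so subtracting
`b (m + 1) / b m` times the `m`-th convolution identity `∑ b (m - i) * e i = 0` from the
`(m + 1)`-st one writes `e (m + 1)` as a combination of `e 1, …, e m` with positive coefficients;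
by induction `e j < 0` for `j ≥ 1`. In the `(n + 1)`-st identity
`0 = ∑_{i ≤ n + 1} b (n + 1 - i) * e i`, replacing each `b (n + 1 - i)` with `i ≤ n` by `b n` can
only increase the sum (`b` decreases, `e 0 > 0`, `e i < 0`), and dropping `e (n + 1) < 0` increases
it strictly, so `0 < b n * ∑_{i ≤ n} e i`.
-/

open Finset Filter

theorem sum_convolution_eq_zero_of_recurrence {R : Type*} [Ring R] {b e : ℕ → R} (hb0 : b 0 = 1)
    (herec : ∀ j, 1 ≤ j → e j = -∑ i ∈ range j, b (j - i) * e i) {m : ℕ} (hm : 1 ≤ m) :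
    ∑ i ∈ range (m + 1), b (m - i) * e i = 0 := by
  rw [sum_range_succ, Nat.sub_self, hb0, one_mul, herec m hm, add_neg_cancel]

section LogConvex

variable {K : Type*} [Field K] [LinearOrder K] [IsStrictOrderedRing K] {b e : ℕ → K}

theorem strictMono_succ_div_of_logConvex (hpos : ∀ j, 0 < b j)
    (hlc : ∀ k, b (k + 1) ^ 2 < b k * b (k + 2)) :
    StrictMono fun k => b (k + 1) / b k :=
  strictMono_nat_of_lt_succ fun k => by
    rw [div_lt_div_iff₀ (hpos k) (hpos (k + 1)), ← sq, mul_comm]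
    exact hlc k

theorem eq_sum_ratio_sub_mul_of_recurrence (hb0 : b 0 = 1)
    (herec : ∀ j, 1 ≤ j → e j = -∑ i ∈ range j, b (j - i) * e i) {m : ℕ} (hm : 1 ≤ m)
    (hbm : b m ≠ 0) :
    e (m + 1) = ∑ i ∈ range m,
      (b (m + 1) / b m * b (m - (i + 1)) - b (m - i)) * e (i + 1) := by
  have h₀ := sum_convolution_eq_zero_of_recurrence hb0 herec hm
  have h₁ := sum_convolution_eq_zero_of_recurrence hb0 herec (hm.trans m.le_succ)
  rw [sum_range_succ'] at h₀
  rw [sum_range_succ, sum_range_succ'] at h₁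
  simp only [Nat.sub_self, Nat.sub_zero, Nat.succ_sub_succ, Nat.succ_eq_add_one, hb0, one_mul]
    at h₀ h₁
  have hsplit : ∑ i ∈ range m, (b (m + 1) / b m * b (m - (i + 1)) - b (m - i)) * e (i + 1) =
      b (m + 1) / b m * ∑ i ∈ range m, b (m - (i + 1)) * e (i + 1) -
        ∑ i ∈ range m, b (m - i) * e (i + 1) := by
    rw [mul_sum, ← sum_sub_distrib]
    exact sum_congr rfl fun i _ => by ring
  rw [hsplit]
  linear_combination h₁ - b (m + 1) / b m * h₀ + e 0 * div_mul_cancel₀ (b (m + 1)) hbm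

/-- Kaluza's theorem. -/
theorem neg_of_recurrence_of_logConvex (hb0 : b 0 = 1) (hpos : ∀ j, 0 < b j)
    (hlc : ∀ k, b (k + 1) ^ 2 < b k * b (k + 2)) (he0 : e 0 = 1)
    (herec : ∀ j, 1 ≤ j → e j = -∑ i ∈ range j, b (j - i) * e i) :
    ∀ j, 1 ≤ j → e j < 0 := by
  have hratio := strictMono_succ_div_of_logConvex hpos hlc
  intro j hj
  induction j using Nat.strong_induction_on with
  | _ j ih =>
  obtain _ | _ | m := j
  · omega
  · rw [herec 1 le_rfl]
    simpa [he0] using hpos 1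
  · rw [eq_sum_ratio_sub_mul_of_recurrence hb0 herec m.succ_pos (hpos _).ne']
    refine sum_neg (fun i hi => ?_) nonempty_range_add_one
    rw [mem_range] at hi
    refine mul_neg_of_pos_of_neg ?_ (ih _ (by omega) (by omega))
    have hk : m + 1 - i = m + 1 - (i + 1) + 1 := by omega
    rw [sub_pos, hk]
    exact (div_lt_iff₀ (hpos _)).mp (hratio (by omega))

theorem sum_range_pos_of_recurrence (hb0 : b 0 = 1) (hpos : ∀ j, 0 < b j) (hanti : Antitone b)
    (he0 : e 0 = 1) (herec : ∀ j, 1 ≤ j → e j = -∑ i ∈ range j, b (j - i) * e i)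
    (hneg : ∀ j, 1 ≤ j → e j < 0) (n : ℕ) :
    0 < ∑ j ∈ range (n + 1), e j := by
  have hconv := sum_convolution_eq_zero_of_recurrence hb0 herec n.succ_pos
  rw [sum_range_succ, Nat.sub_self, hb0, one_mul] at hconv
  have hterm : ∀ i ∈ range (n + 1), b (n + 1 - i) * e i ≤ b n * e i := by
    intro i hi
    rcases i.eq_zero_or_pos with rfl | hi₀
    · rw [he0, mul_one, mul_one]
      exact hanti n.le_succ
    · rw [mem_range] at hi
      exact mul_le_mul_of_nonpos_right (hanti (by omega)) (hneg i hi₀).le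
  have hprod : 0 < b n * ∑ j ∈ range (n + 1), e j := calc
    0 = ∑ i ∈ range (n + 1), b (n + 1 - i) * e i + e (n + 1) := hconv.symm
    _ < ∑ i ∈ range (n + 1), b (n + 1 - i) * e i := by linarith [hneg (n + 1) n.succ_pos]
    _ ≤ ∑ i ∈ range (n + 1), b n * e i := sum_le_sum hterm
    _ = b n * ∑ j ∈ range (n + 1), e j := (mul_sum _ _ _).symm
  exact pos_of_mul_pos_right hprod (hpos n).le

end LogConvex

theorem stmt_6_general (b e : ℕ → ℝ)
    (hb0 : b 0 = 1)
    (hbpos : ∀ j, 0 < b j)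
    (hbdec : ∀ j, b (j + 1) < b j)
    (hblc : ∀ j : ℕ, 1 ≤ j → (b j) ^ 2 < b (j - 1) * b (j + 1))
    (he0 : e 0 = 1)
    (herec : ∀ j : ℕ, 1 ≤ j → e j = -∑ i ∈ Finset.range j, b (j - i) * e i)
    (n : ℕ) :
    0 < ∑ j ∈ Finset.range (n + 1), e j := by
  have hlc : ∀ k, b (k + 1) ^ 2 < b k * b (k + 2) := fun k => by
    simpa using hblc (k + 1) k.succ_pos
  have hneg := neg_of_recurrence_of_logConvex hb0 hbpos hlc he0 herec
  exact sum_range_pos_of_recurrence hb0 hbpos (antitone_nat_of_succ_le fun j => (hbdec j).le)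
    he0 herec hneg n

/-- If `b` is positive, strictly decreasing, strictly log-convex with `b 0 = 1`
and `∑ b j = ∞`, then the partial sums of the reciprocal power series
coefficients `e` are strictly positive: `∑_{j=0}^{n} e j > 0` for all `n`. -/
theorem stmt_6 (b e : ℕ → ℝ)
    (hb0 : b 0 = 1)
    (hbpos : ∀ j, 0 < b j)
    (hbdec : ∀ j, b (j + 1) < b j)
    (hblc : ∀ j : ℕ, 1 ≤ j → (b j) ^ 2 < b (j - 1) * b (j + 1))
    (hbdiv : Tendsto (fun n : ℕ => ∑ j ∈ Finset.range n, b j) atTop atTop)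
    (he0 : e 0 = 1)
    (herec : ∀ j : ℕ, 1 ≤ j → e j = -∑ i ∈ Finset.range j, b (j - i) * e i)
    (n : ℕ) :
    0 < ∑ j ∈ Finset.range (n + 1), e j :=
  stmt_6_general b e hb0 hbpos hbdec hblc he0 herec n
end

section
/- For 0 < α < 1 and any P ≥ 1, the lower-triangular Toeplitz matrix W_α with (W_α)_{i,j} = b_{i-j} for i ≥ j (b_j = (j+1)^{1-α} - j^{1-α}, b_0 = 1) and 0 otherwise is positive definite, i.e., xᵀ W_α x > 0 for all nonzero x ∈ ℝ^P. -/
open Matrix Finset Real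

/-! Writing `b k = (k+1)^p - k^p` with `p = 1 - α`, we have `W + Wᵀ = T + 1`, where `T` is the
symmetric Toeplitz matrix `(b |i - j|)`. Since `b` is nonnegative, nonincreasing and convex, `T`
is a nonnegative combination of the all-ones matrix and the Fejér-type matrices
`((m - |i - j|)₊)`, each of which is a Gram matrix of sliding-window indicator vectors; hence `T`
is positive semidefinite and `W + Wᵀ` positive definite. -/

section Toeplitz

variable {R : Type*}

def symmToeplitz (n : ℕ) (f : ℕ → R) : Matrix (Fin n) (Fin n) R :=
  of fun i j => f (Nat.dist i j)

def lowerToeplitz [Zero R] (n : ℕ) (f : ℕ → R) : Matrix (Fin n) (Fin n) R :=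
  of fun i j => if (j : ℕ) ≤ i then f (i - j) else 0

theorem lowerToeplitz_add_transpose [Ring R] (n : ℕ) (f : ℕ → R) :
    lowerToeplitz n f + (lowerToeplitz n f)ᵀ = symmToeplitz n f + f 0 • 1 := by
  ext i j
  rcases lt_trichotomy i j with h | rfl | h
  · simp [lowerToeplitz, symmToeplitz, Nat.dist, one_apply, h.ne, h.not_ge, h.le,
      Nat.sub_eq_zero_of_le (Fin.le_iff_val_le_val.mp h.le)]
  · simp [lowerToeplitz, symmToeplitz, Nat.dist]
  · simp [lowerToeplitz, symmToeplitz, Nat.dist, one_apply, h.ne', h.not_ge, h.le,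
      Nat.sub_eq_zero_of_le (Fin.le_iff_val_le_val.mp h.le)]

end Toeplitz

theorem dotProduct_add_transpose_mulVec {R n : Type*} [CommSemiring R] [Fintype n]
    (A : Matrix n n R) (x : n → R) :
    x ⬝ᵥ (A + Aᵀ) *ᵥ x = 2 * (x ⬝ᵥ A *ᵥ x) := by
  rw [add_mulVec, dotProduct_add, mulVec_transpose, dotProduct_comm x (x ᵥ* A),
    ← dotProduct_mulVec, two_mul]

def slidingWindow (n m : ℕ) : Matrix (Fin (n + m)) (Fin n) ℝ :=
  of fun t i => if (i : ℕ) ≤ t ∧ (t : ℕ) < i + m then 1 else 0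

-- `(m - k : ℕ)` is the tent `(m - k)₊`; entry `(i, j)` of the Gram matrix counts the windows
-- `[t - m + 1, t]` containing both `i` and `j`.
theorem symmToeplitz_tent_eq (n m : ℕ) :
    symmToeplitz n (fun k => ((m - k : ℕ) : ℝ)) = (slidingWindow n m)ᵀ * slidingWindow n m := by
  ext i j
  have hwindows : (range (n + m)).filter
      (fun t => ((i : ℕ) ≤ t ∧ t < i + m) ∧ ((j : ℕ) ≤ t ∧ t < j + m)) =
      Ico (max (i : ℕ) j) (min (i : ℕ) j + m) := by
    ext t
    simp only [mem_filter, mem_range, mem_Ico]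
    omega
  simp only [symmToeplitz, slidingWindow, mul_apply, transpose_apply, of_apply,
    ite_zero_mul_ite_zero, mul_one]
  rw [Fin.sum_univ_eq_sum_range (fun t => if ((i : ℕ) ≤ t ∧ t < i + m) ∧ ((j : ℕ) ≤ t ∧ t < j + m)
    then (1 : ℝ) else 0), sum_boole, hwindows, Nat.card_Ico, Nat.dist]
  congr 1
  omega

theorem posSemidef_symmToeplitz_tent (n m : ℕ) :
    (symmToeplitz n (fun k => ((m - k : ℕ) : ℝ))).PosSemidef := by
  rw [symmToeplitz_tent_eq]
  exact posSemidef_conjTranspose_mul_self _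

theorem posSemidef_symmToeplitz_one (n : ℕ) : (symmToeplitz n (fun _ => (1 : ℝ))).PosSemidef := by
  convert posSemidef_vecMulVec_self_star (fun _ : Fin n => (1 : ℝ))
  ext i j
  simp [symmToeplitz, vecMulVec]

theorem eq_tentExpansion (f : ℕ → ℝ) {N k : ℕ} (hk : k ≤ N) :
    f k = f N + ((N - k : ℕ) : ℝ) * (f (N - 1) - f N) +
      ∑ l ∈ range (N - 1), ((l + 1 - k : ℕ) : ℝ) * (f l - 2 * f (l + 1) + f (l + 2)) := by
  induction N with
  | zero => simp [Nat.le_zero.mp hk]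
  | succ N ih =>
    rcases hk.lt_or_eq with hk | rfl
    · rw [ih (Nat.lt_succ_iff.mp hk)]
      rcases N with _ | N
      · simp [Nat.lt_one_iff.mp hk]
      · rw [Nat.add_sub_cancel, Nat.add_sub_cancel, sum_range_succ,
          show N + 1 + 1 - k = (N + 1 - k) + 1 by omega]
        push_cast
        ring
    · rw [sum_eq_zero fun l hl => by
        rw [Nat.sub_eq_zero_of_le (by simp at hl; omega)]; simp]
      simp

theorem posSemidef_symmToeplitz_of_convex {f : ℕ → ℝ} (hf_nonneg : ∀ k, 0 ≤ f k)
    (hf_anti : Antitone f) (hf_conv : ∀ k, 0 ≤ f k - 2 * f (k + 1) + f (k + 2)) (n : ℕ) :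
    (symmToeplitz n f).PosSemidef := by
  set N := n - 1
  have hexpansion : symmToeplitz n f =
      f N • symmToeplitz n (fun _ => 1) +
      (f (N - 1) - f N) • symmToeplitz n (fun k => ((N - k : ℕ) : ℝ)) +
      ∑ l ∈ range (N - 1),
        (f l - 2 * f (l + 1) + f (l + 2)) • symmToeplitz n (fun k => ((l + 1 - k : ℕ) : ℝ)) := by
    ext i j
    have hdist : Nat.dist i j ≤ N := by
      have := i.isLt; have := j.isLt; simp only [Nat.dist]; omega
    simp only [symmToeplitz, Matrix.add_apply, Matrix.smul_apply, Matrix.sum_apply, of_apply,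
      smul_eq_mul]
    rw [eq_tentExpansion f hdist]
    simp only [mul_one, mul_comm]
  rw [hexpansion]
  refine (((posSemidef_symmToeplitz_one n).smul (hf_nonneg N)).add
    ((posSemidef_symmToeplitz_tent n N).smul (sub_nonneg.2 (hf_anti (Nat.sub_le N 1))))).add
    (posSemidef_sum _ fun l _ => (posSemidef_symmToeplitz_tent n (l + 1)).smul (hf_conv l))

theorem ConvexOn.two_mul_le_add {s : Set ℝ} {g : ℝ → ℝ} (hg : ConvexOn ℝ s g) {y : ℝ}
    (hy : y ∈ s) (hy2 : y + 2 ∈ s) : 2 * g (y + 1) ≤ g y + g (y + 2) := by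
  have h := hg.2 hy hy2 (by norm_num : (0 : ℝ) ≤ 1 / 2) (by norm_num : (0 : ℝ) ≤ 1 / 2)
    (by norm_num)
  rw [show (1 / 2 : ℝ) • y + (1 / 2 : ℝ) • (y + 2) = y + 1 by simp only [smul_eq_mul]; ring] at h
  simp only [smul_eq_mul] at h
  linarith

theorem convexOn_rpow_add_one_sub_rpow {p : ℝ} (hp0 : 0 ≤ p) (hp1 : p ≤ 1) :
    ConvexOn ℝ (Set.Ici 0) fun y : ℝ => (y + 1) ^ p - y ^ p := by
  have hderiv (q y : ℝ) (hy : 0 < y) :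
      HasDerivAt (fun y : ℝ => (y + 1) ^ q - y ^ q)
        (q * (y + 1) ^ (q - 1) - q * y ^ (q - 1)) y := by
    have hshift := ((hasDerivAt_id y).add_const 1).rpow_const (p := q) (Or.inl (by positivity))
    exact (hshift.sub (hasDerivAt_rpow_const (Or.inl hy.ne'))).congr_deriv (by simp)
  refine convexOn_of_hasDerivWithinAt2_nonneg (convex_Ici 0)
    ((continuous_rpow_const hp0).comp (continuous_add_const 1) |>.sub
      (continuous_rpow_const hp0)).continuousOn
    (f' := fun y => p * (y + 1) ^ (p - 1) - p * y ^ (p - 1))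
    (f'' := fun y => p * ((p - 1) * (y + 1) ^ (p - 1 - 1)) - p * ((p - 1) * y ^ (p - 1 - 1)))
    ?_ ?_ ?_ <;> rw [interior_Ici] <;> intro y (hy : 0 < y)
  · exact (hderiv p y hy).hasDerivWithinAt
  · simpa only [mul_sub] using ((hderiv (p - 1) y hy).const_mul p).hasDerivWithinAt
  · have hle : (y + 1) ^ (p - 1 - 1) ≤ y ^ (p - 1 - 1) :=
      rpow_le_rpow_of_nonpos hy (by linarith) (by linarith)
    nlinarith [mul_nonneg (mul_nonneg hp0 (sub_nonneg.2 hp1)) (sub_nonneg.2 hle)]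

noncomputable def rpowIncrement (p : ℝ) (k : ℕ) : ℝ := ((k : ℝ) + 1) ^ p - (k : ℝ) ^ p

theorem rpowIncrement_zero {p : ℝ} (hp : p ≠ 0) : rpowIncrement p 0 = 1 := by
  simp [rpowIncrement, zero_rpow hp]

theorem rpowIncrement_nonneg {p : ℝ} (hp : 0 ≤ p) (k : ℕ) : 0 ≤ rpowIncrement p k :=
  sub_nonneg.2 (rpow_le_rpow k.cast_nonneg (by linarith) hp)

theorem rpowIncrement_antitone {p : ℝ} (hp0 : 0 ≤ p) (hp1 : p ≤ 1) :
    Antitone (rpowIncrement p) := by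
  refine antitone_nat_of_succ_le fun k => ?_
  have h := (concaveOn_rpow hp0 hp1).neg.two_mul_le_add (y := k) (Set.mem_Ici.2 k.cast_nonneg)
    (Set.mem_Ici.2 (by positivity))
  simp only [Pi.neg_apply] at h
  simp only [rpowIncrement]
  push_cast
  rw [show (k : ℝ) + 1 + 1 = k + 2 by ring]
  linarith

theorem rpowIncrement_secondDiff_nonneg {p : ℝ} (hp0 : 0 ≤ p) (hp1 : p ≤ 1) (k : ℕ) :
    0 ≤ rpowIncrement p k - 2 * rpowIncrement p (k + 1) + rpowIncrement p (k + 2) := by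
  have h := (convexOn_rpow_add_one_sub_rpow hp0 hp1).two_mul_le_add (y := k)
    (Set.mem_Ici.2 k.cast_nonneg) (Set.mem_Ici.2 (by positivity))
  simp only [rpowIncrement]
  push_cast
  rw [show (k : ℝ) + 1 + 1 = k + 2 by ring] at h ⊢
  linarith

theorem stmt_8_general (α : ℝ) (hα0 : 0 < α) (hα1 : α < 1) (P : ℕ)
    (W : Matrix (Fin P) (Fin P) ℝ)
    (hW : ∀ i j : Fin P, W i j =
      if (j : ℕ) ≤ (i : ℕ) then
        (((i : ℕ) - (j : ℕ) : ℕ) + 1 : ℝ) ^ (1 - α) - (((i : ℕ) - (j : ℕ) : ℕ) : ℝ) ^ (1 - α)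
      else 0)
    (x : Fin P → ℝ) (hx : x ≠ 0) :
    0 < x ⬝ᵥ W.mulVec x := by
  have hp0 : 0 ≤ 1 - α := by linarith
  have hp1 : 1 - α ≤ 1 := by linarith
  have hW_eq : W = lowerToeplitz P (rpowIncrement (1 - α)) := by
    ext i j
    simp only [hW, lowerToeplitz, rpowIncrement, of_apply]
  have hsymm_pd : (W + Wᵀ).PosDef := by
    rw [hW_eq, lowerToeplitz_add_transpose, rpowIncrement_zero (by linarith), one_smul]
    exact PosDef.posSemidef_add (posSemidef_symmToeplitz_of_convex (rpowIncrement_nonneg hp0)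
      (rpowIncrement_antitone hp0 hp1) (rpowIncrement_secondDiff_nonneg hp0 hp1) P) PosDef.one
  have hpos := hsymm_pd.dotProduct_mulVec_pos hx
  rw [star_trivial, dotProduct_add_transpose_mulVec] at hpos
  linarith

/-- For `0 < α < 1` and `P ≥ 1`, the lower-triangular Toeplitz matrix `W_α`
generated by `b j = (j+1)^(1-α) - j^(1-α)` is positive definite in the
quadratic-form sense: `xᵀ W_α x > 0` for all nonzero `x ∈ ℝ^P`. -/
theorem stmt_8 (α : ℝ) (hα0 : 0 < α) (hα1 : α < 1) (P : ℕ) (hP : 1 ≤ P)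
    (W : Matrix (Fin P) (Fin P) ℝ)
    (hW : ∀ i j : Fin P, W i j =
      if (j : ℕ) ≤ (i : ℕ) then
        (((i : ℕ) - (j : ℕ) : ℕ) + 1 : ℝ) ^ (1 - α) - (((i : ℕ) - (j : ℕ) : ℕ) : ℝ) ^ (1 - α)
      else 0)
    (x : Fin P → ℝ) (hx : x ≠ 0) :
    0 < x ⬝ᵥ W.mulVec x :=
  stmt_8_general α hα0 hα1 P W hW x hx
end

section
/- Uniqueness for the left-sided finite difference scheme: let P ≥ 2, α ∈ (0,1), κ : ℝ → ℝ with κ > 0, and let U : {0,…,P} → ℝ satisfy U_0 = U_P = 0 and, for 1 ≤ n ≤ P-1, κ^{n-1/2} ∑_{j=1}^n w_{n,j} δU_j − κ^{n+1/2} ∑_{j=1}^{n+1} w_{n+1,j} δU_j = 0, where w_{n,j} = (n+1-j)^{1-α} − (n-j)^{1-α}, δU_j = U_j − U_{j-1}, and κ^{m+1/2} = κ(x_{m+1/2}) > 0. Then U ≡ 0. -/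
/-! By the scheme, the flux `κ^{n-1/2} ∑ⱼ w_{n,j} δUⱼ` takes one value `c` at every node. Summation
by parts, with `w_{n,n} = 1`, turns this into `Uₙ = c / κ^{n-1/2} + ∑_{j<n} (w_{n,j+1} - w_{n,j}) Uⱼ`,
and the coefficients are nonnegative by concavity of `t ↦ t^{1-α}`. Such a recursion passes the
sign of `c` on to every `Uₙ`, so `U_P = 0` forces `c = 0`, and then `U ≡ 0`. -/

open Finset

lemma rpow_add_two_sub_rpow_add_one_le {p : ℝ} (hp0 : 0 ≤ p) (hp1 : p ≤ 1) {x : ℝ} (hx : 0 ≤ x) :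
    (x + 2) ^ p - (x + 1) ^ p ≤ (x + 1) ^ p - x ^ p := by
  have h := (Real.concaveOn_rpow hp0 hp1).2 (Set.mem_Ici.2 hx)
    (Set.mem_Ici.2 (by linarith : (0 : ℝ) ≤ x + 2)) (by norm_num : (0 : ℝ) ≤ 1 / 2)
    (by norm_num : (0 : ℝ) ≤ 1 / 2) (by norm_num)
  have hmid : (1 / 2 : ℝ) • x + (1 / 2 : ℝ) • (x + 2) = x + 1 := by
    simp only [smul_eq_mul]; ring
  rw [hmid] at h
  simp only [smul_eq_mul] at h
  linarith

noncomputable def l1Weight (p : ℝ) (n j : ℕ) : ℝ :=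
  ((n + 1 - j : ℕ) : ℝ) ^ p - ((n - j : ℕ) : ℝ) ^ p

lemma l1Weight_self {p : ℝ} (hp : p ≠ 0) (n : ℕ) : l1Weight p n n = 1 := by
  simp [l1Weight, Real.zero_rpow hp]

lemma l1Weight_le_succ {p : ℝ} (hp0 : 0 ≤ p) (hp1 : p ≤ 1) {n j : ℕ} (hjn : j < n) :
    l1Weight p n j ≤ l1Weight p n (j + 1) := by
  obtain ⟨k, rfl⟩ : ∃ k, n = j + 1 + k := ⟨n - (j + 1), by omega⟩
  have h := rpow_add_two_sub_rpow_add_one_le hp0 hp1 k.cast_nonneg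
  simp only [l1Weight, show j + 1 + k + 1 - j = k + 2 by omega, show j + 1 + k - j = k + 1 by omega,
    show j + 1 + k + 1 - (j + 1) = k + 1 by omega, show j + 1 + k - (j + 1) = k by omega]
  push_cast
  linarith

lemma sum_Icc_mul_sub_eq (g U : ℕ → ℝ) (hU0 : U 0 = 0) (n : ℕ) :
    ∑ j ∈ Icc 1 n, g j * (U j - U (j - 1))
      = g n * U n - ∑ j ∈ Ico 1 n, (g (j + 1) - g j) * U j := by
  induction n with
  | zero => simp [hU0]
  | succ n ih =>
    rcases Nat.eq_zero_or_pos n with rfl | hn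
    · simp [hU0]
    rw [sum_Icc_succ_top (by omega), ih, sum_Ico_succ_top hn, Nat.add_sub_cancel]
    ring

lemma apply_eq_apply_one_of_forall_eq_succ {β : Type*} {P : ℕ} {f : ℕ → β}
    (h : ∀ n, 1 ≤ n → n ≤ P - 1 → f n = f (n + 1)) : ∀ n, 1 ≤ n → n ≤ P → f n = f 1 := by
  intro n hn
  induction n, hn using Nat.le_induction with
  | base => exact fun _ => rfl
  | succ n hn ih => exact fun hnP => (h n hn (by omega)).symm.trans (ih (by omega))

section Comparison

variable {P : ℕ} {e : ℕ → ℕ → ℝ} {B V : ℕ → ℝ}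

lemma le_of_eq_add_sum (he : ∀ n j, 1 ≤ j → j < n → 0 ≤ e n j)
    (hB : ∀ n, 1 ≤ n → n ≤ P → 0 ≤ B n)
    (hV : ∀ n, 1 ≤ n → n ≤ P → V n = B n + ∑ j ∈ Ico 1 n, e n j * V j) :
    ∀ n, 1 ≤ n → n ≤ P → B n ≤ V n := by
  intro n
  induction n using Nat.strong_induction_on with
  | _ n ih =>
    intro h1 hnP
    have hsum : 0 ≤ ∑ j ∈ Ico 1 n, e n j * V j := by
      refine sum_nonneg fun j hj => ?_
      rw [mem_Ico] at hj
      exact mul_nonneg (he n j hj.1 hj.2)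
        ((hB j hj.1 (by omega)).trans (ih j hj.2 hj.1 (by omega)))
    linarith [hV n h1 hnP]

lemma nonpos_of_eq_div_add_sum {κ : ℕ → ℝ} {c : ℝ} (hκ : ∀ m, 0 < κ m) (hP : 1 ≤ P)
    (he : ∀ n j, 1 ≤ j → j < n → 0 ≤ e n j) (hVP : V P = 0)
    (hV : ∀ n, 1 ≤ n → n ≤ P → V n = c / κ (n - 1) + ∑ j ∈ Ico 1 n, e n j * V j) :
    c ≤ 0 := by
  by_contra! hc
  have hle := le_of_eq_add_sum he (fun n _ _ => (div_pos hc (hκ (n - 1))).le) hV P hP le_rfl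
  linarith [div_pos hc (hκ (P - 1))]

lemma eq_zero_of_eq_div_add_sum {κ : ℕ → ℝ} {c : ℝ} (hκ : ∀ m, 0 < κ m) (hP : 1 ≤ P)
    (he : ∀ n j, 1 ≤ j → j < n → 0 ≤ e n j) (hV0 : V 0 = 0) (hVP : V P = 0)
    (hV : ∀ n, 1 ≤ n → n ≤ P → V n = c / κ (n - 1) + ∑ j ∈ Ico 1 n, e n j * V j) :
    ∀ n, n ≤ P → V n = 0 := by
  have hneg : ∀ n, 1 ≤ n → n ≤ P →
      -V n = -c / κ (n - 1) + ∑ j ∈ Ico 1 n, e n j * -V j := fun n h1 h2 => by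
    rw [hV n h1 h2, neg_div, neg_add, ← sum_neg_distrib]
    simp only [mul_neg]
  have hc : c = 0 := le_antisymm (nonpos_of_eq_div_add_sum hκ hP he hVP hV)
    (neg_nonpos.1 (nonpos_of_eq_div_add_sum hκ hP he (by simp [hVP]) hneg))
  subst hc
  simp only [neg_zero, zero_div] at hV hneg
  intro n hnP
  rcases Nat.eq_zero_or_pos n with rfl | hn
  · exact hV0
  have hV_nonneg := le_of_eq_add_sum he (fun _ _ _ => le_rfl) hV n hn hnP
  have hV_nonpos := le_of_eq_add_sum he (fun _ _ _ => le_rfl) hneg n hn hnP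
  linarith

end Comparison

/-- Uniqueness for the left-sided finite difference scheme: if `U` satisfies the
homogeneous scheme with positive midpoint diffusivity values `κ (m)` (denoting
`κ^{m+1/2}`) and `U 0 = U P = 0`, then `U ≡ 0` on `{0,…,P}`. -/
theorem stmt_13 (α : ℝ) (hα0 : 0 < α) (hα1 : α < 1)
    (P : ℕ) (hP : 2 ≤ P)
    (κ : ℕ → ℝ) (hκ : ∀ m, 0 < κ m)
    (w : ℕ → ℕ → ℝ)
    (hw : ∀ n j : ℕ, 1 ≤ j → j ≤ n →
      w n j = ((n + 1 - j : ℕ) : ℝ) ^ (1 - α) - ((n - j : ℕ) : ℝ) ^ (1 - α))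
    (U : ℕ → ℝ) (hU0 : U 0 = 0) (hUP : U P = 0)
    (hscheme : ∀ n : ℕ, 1 ≤ n → n ≤ P - 1 →
      κ (n - 1) * ∑ j ∈ Finset.Icc 1 n, w n j * (U j - U (j - 1))
        - κ n * ∑ j ∈ Finset.Icc 1 (n + 1), w (n + 1) j * (U j - U (j - 1)) = 0) :
    ∀ n : ℕ, n ≤ P → U n = 0 := by
  have hwl : ∀ n j, 1 ≤ j → j ≤ n → w n j = l1Weight (1 - α) n j := hw
  set A : ℕ → ℝ := fun n => ∑ j ∈ Icc 1 n, w n j * (U j - U (j - 1))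
  have hflux : ∀ n, 1 ≤ n → n ≤ P → κ (n - 1) * A n = κ 0 * A 1 :=
    apply_eq_apply_one_of_forall_eq_succ (f := fun n => κ (n - 1) * A n) fun n h1 h2 => by
      simpa [sub_eq_zero] using hscheme n h1 h2
  refine eq_zero_of_eq_div_add_sum (e := fun n j => w n (j + 1) - w n j) (c := κ 0 * A 1)
    hκ (by omega) (fun n j h1 hjn => ?_) hU0 hUP fun n h1 hnP => ?_
  · rw [hwl n (j + 1) (by omega) hjn, hwl n j h1 hjn.le, sub_nonneg]
    exact l1Weight_le_succ (by linarith) (by linarith) hjn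
  · rw [← hflux n h1 hnP, mul_div_cancel_left₀ _ (hκ _).ne',
      show A n = _ from sum_Icc_mul_sub_eq _ _ hU0 n, hwl n n h1 le_rfl,
      l1Weight_self (by linarith) n]
    ring
end
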